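/- Let f(t) = t/(2k) - 1/2 + Φ(-t/σ) with k, σ > 0. Then f(0) = 0, f is strictly convex on [0, ∞), f'(0) = 1/(2k) - 1/(σ√(2π)), and f(t) → ∞ as t → ∞. Consequently, f has a strictly positive zero if and only if f'(0) < 0, i.e., if and only if k > σ√(π/2). -/

import Mathlib

open MeasureTheory

/-- Standard normal CDF. -/
noncomputable def stdNormalCDF (t : ℝ) : ℝ :=
  ∫ s in Set.Iic t, (Real.sqrt (2 * Real.pi))⁻¹ * Real.exp (-s ^ 2 / 2)

/-- The function f(t) = t/(2k) - 1/2 + Φ(-t/σ). -/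
noncomputable def fEq (k σ t : ℝ) : ℝ := t / (2 * k) - 1 / 2 + stdNormalCDF (-t / σ)

noncomputable def nphi (s : ℝ) : ℝ := (Real.sqrt (2 * Real.pi))⁻¹ * Real.exp (-s ^ 2 / 2)

lemma nphi_cont : Continuous nphi := by
  unfold nphi; fun_prop

lemma nphi_pos (s : ℝ) : 0 < nphi s := by
  unfold nphi
  positivity

lemma nphi_even (s : ℝ) : nphi (-s) = nphi s := by
  unfold nphi; rw [neg_pow]; ring_nf

lemma nphi_integrable : Integrable nphi := by
  have h : Integrable (fun s : ℝ => Real.exp (-(1/2 : ℝ) * s ^ 2)) :=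
    integrable_exp_neg_mul_sq (by norm_num)
  have : Integrable (fun s : ℝ => Real.exp (-s ^ 2 / 2)) := by
    convert h using 2 with s; ring_nf
  exact this.const_mul _

lemma nphi_total : ∫ s, nphi s = 1 := by
  unfold nphi
  rw [MeasureTheory.integral_const_mul]
  have h : ∫ s : ℝ, Real.exp (-s ^ 2 / 2) = Real.sqrt (Real.pi / (1/2)) := by
    rw [← integral_gaussian (1/2 : ℝ)]
    congr 1 with s; ring_nf
  rw [h]
  have : Real.pi / (1/2 : ℝ) = 2 * Real.pi := by ring
  rw [this, inv_mul_cancel₀]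
  positivity

lemma cdf_eq (t : ℝ) : stdNormalCDF t = ∫ s in Set.Iic t, nphi s := rfl

lemma cdf_sub (a b : ℝ) : stdNormalCDF b - stdNormalCDF a = ∫ s in a..b, nphi s := by
  rw [cdf_eq, cdf_eq]
  exact intervalIntegral.integral_Iic_sub_Iic nphi_integrable.integrableOn
    nphi_integrable.integrableOn

lemma cdf_zero : stdNormalCDF 0 = 1 / 2 := by
  have hsym : ∫ s in Set.Iic (0:ℝ), nphi s = ∫ s in Set.Ioi (0:ℝ), nphi s := by
    have h := integral_comp_neg_Iic (0:ℝ) nphi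
    simpa only [nphi_even, neg_zero] using h
  have hadd := intervalIntegral.integral_Iic_add_Ioi (b := (0:ℝ))
    nphi_integrable.integrableOn nphi_integrable.integrableOn
  rw [nphi_total, ← hsym] at hadd
  rw [cdf_eq]; linarith

lemma fEq_eq (k σ t : ℝ) : fEq k σ t = t / (2 * k) + ∫ s in (0:ℝ)..(-t/σ), nphi s := by
  unfold fEq
  have := cdf_sub 0 (-t/σ)
  rw [cdf_zero] at this
  linarith

lemma hasDerivAt_fEq (k σ : ℝ) (hσ : 0 < σ) (x : ℝ) :
    HasDerivAt (fEq k σ) (1 / (2 * k) - nphi (x / σ) / σ) x := by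
  have hint : HasDerivAt (fun u : ℝ => ∫ s in (0:ℝ)..u, nphi s) (nphi (-x/σ)) (-x/σ) :=
    intervalIntegral.integral_hasDerivAt_right nphi_integrable.intervalIntegrable
      (nphi_cont.stronglyMeasurable.stronglyMeasurableAtFilter) nphi_cont.continuousAt
  have hlin : HasDerivAt (fun t : ℝ => -t/σ) (-1/σ) x := by
    simpa using ((hasDerivAt_id x).neg.div_const σ)
  have hcomp := hint.comp x hlin
  have hfull : HasDerivAt (fun t : ℝ => t / (2 * k) + ∫ s in (0:ℝ)..(-t/σ), nphi s)
      (1 / (2 * k) + nphi (-x/σ) * (-1/σ)) x := by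
    have h1 : HasDerivAt (fun t : ℝ => t / (2 * k)) (1 / (2 * k)) x := by
      simpa using (hasDerivAt_id x).div_const (2 * k)
    exact h1.add hcomp
  have heq : (fun t : ℝ => t / (2 * k) + ∫ s in (0:ℝ)..(-t/σ), nphi s) = fEq k σ := by
    funext t; rw [fEq_eq]
  rw [heq] at hfull
  have : nphi (-x/σ) * (-1/σ) = -(nphi (x/σ) / σ) := by
    rw [neg_div, nphi_even]; ring
  rw [this] at hfull
  simpa [sub_eq_add_neg] using hfull

lemma fEq_cont (k σ : ℝ) (hσ : 0 < σ) : Continuous (fEq k σ) := by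
  have : ∀ x, HasDerivAt (fEq k σ) (1 / (2 * k) - nphi (x / σ) / σ) x :=
    hasDerivAt_fEq k σ hσ
  exact continuous_iff_continuousAt.2 fun x => (this x).continuousAt

lemma deriv_fEq (k σ : ℝ) (hσ : 0 < σ) (x : ℝ) :
    deriv (fEq k σ) x = 1 / (2 * k) - nphi (x / σ) / σ :=
  (hasDerivAt_fEq k σ hσ x).deriv

lemma derivStrictMono (k σ : ℝ) (hσ : 0 < σ) :
    StrictMonoOn (deriv (fEq k σ)) (Set.Ioi 0) := by
  intro a ha b hb hab
  rw [deriv_fEq k σ hσ, deriv_fEq k σ hσ]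
  have ha' : (0:ℝ) < a / σ := div_pos ha hσ
  have h2 : nphi (b / σ) < nphi (a / σ) := by
    unfold nphi
    have hinv : (0:ℝ) < (Real.sqrt (2 * Real.pi))⁻¹ := by positivity
    refine mul_lt_mul_of_pos_left ?_ hinv
    apply Real.exp_lt_exp.2
    have hab' : a / σ < b / σ := by gcongr
    have : a / σ * (a / σ) < b / σ * (b / σ) :=
      mul_lt_mul'' hab' hab' ha'.le ha'.le
    nlinarith
  have : nphi (b / σ) / σ < nphi (a / σ) / σ := by gcongr
  linarith

lemma strictConvex (k σ : ℝ) (hσ : 0 < σ) :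
    StrictConvexOn ℝ (Set.Ici 0) (fEq k σ) := by
  apply StrictMonoOn.strictConvexOn_of_deriv (convex_Ici 0) ((fEq_cont k σ hσ).continuousOn)
  rw [interior_Ici]
  exact derivStrictMono k σ hσ

lemma cdf_nonneg (t : ℝ) : 0 ≤ stdNormalCDF t := by
  rw [cdf_eq]
  exact MeasureTheory.setIntegral_nonneg measurableSet_Iic fun s _ => (nphi_pos s).le

lemma fEq_tendsto (k σ : ℝ) (hk : 0 < k) (hσ : 0 < σ) :
    Filter.Tendsto (fEq k σ) Filter.atTop Filter.atTop := by
  have hbase : Filter.Tendsto (fun t : ℝ => t / (2 * k) - 1 / 2) Filter.atTop Filter.atTop := by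
    apply Filter.tendsto_atTop_add_const_right
    exact Filter.Tendsto.atTop_div_const (by positivity) Filter.tendsto_id
  apply Filter.tendsto_atTop_mono _ hbase
  intro t
  unfold fEq
  have := cdf_nonneg (-t/σ)
  linarith

/-- f(0) = 0, f is strictly convex on [0,∞), f'(0) = 1/(2k) - 1/(σ√(2π)),
f(t) → ∞ as t → ∞, and f has a strictly positive zero iff f'(0) < 0 iff k > σ√(π/2). -/
theorem stmt1 (k σ : ℝ) (hk : 0 < k) (hσ : 0 < σ) :
    fEq k σ 0 = 0 ∧
    StrictConvexOn ℝ (Set.Ici 0) (fEq k σ) ∧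
    HasDerivAt (fEq k σ) (1 / (2 * k) - 1 / (σ * Real.sqrt (2 * Real.pi))) 0 ∧
    Filter.Tendsto (fEq k σ) Filter.atTop Filter.atTop ∧
    ((∃ t : ℝ, 0 < t ∧ fEq k σ t = 0) ↔ 1 / (2 * k) - 1 / (σ * Real.sqrt (2 * Real.pi)) < 0) ∧
    ((∃ t : ℝ, 0 < t ∧ fEq k σ t = 0) ↔ σ * Real.sqrt (Real.pi / 2) < k) := by
  have hsqrt : (0:ℝ) < Real.sqrt (2 * Real.pi) := Real.sqrt_pos.2 (by positivity)
  have hzero : fEq k σ 0 = 0 := by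
    unfold fEq
    rw [neg_zero, zero_div, zero_div, cdf_zero]; ring
  have hderiv0 : HasDerivAt (fEq k σ) (1 / (2 * k) - 1 / (σ * Real.sqrt (2 * Real.pi))) 0 := by
    have := hasDerivAt_fEq k σ hσ 0
    have heq : nphi (0 / σ) / σ = 1 / (σ * Real.sqrt (2 * Real.pi)) := by
      rw [zero_div]
      unfold nphi
      norm_num
      ring
    rwa [heq] at this
  -- existence of positive zero iff derivative at 0 is negative
  have hiff : (∃ t : ℝ, 0 < t ∧ fEq k σ t = 0) ↔
      1 / (2 * k) - 1 / (σ * Real.sqrt (2 * Real.pi)) < 0 := by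
    constructor
    · intro ⟨t, ht, hft⟩
      by_contra hge
      push_neg at hge
      -- f' > 0 on (0, ∞) hence f strictly increasing on [0, ∞), so f t > f 0 = 0
      have hpos : ∀ x ∈ Set.Ioi (0:ℝ), 0 < deriv (fEq k σ) x := by
        intro x hx
        rw [deriv_fEq k σ hσ]
        have hx' : (0:ℝ) < x / σ := div_pos hx hσ
        have h1 : nphi (x / σ) < nphi 0 := by
          unfold nphi
          have hinv : (0:ℝ) < (Real.sqrt (2 * Real.pi))⁻¹ := by positivity
          refine mul_lt_mul_of_pos_left ?_ hinv
          apply Real.exp_lt_exp.2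
          nlinarith
        have h0 : nphi 0 = 1 / Real.sqrt (2 * Real.pi) := by
          unfold nphi
          norm_num
        have h2 : nphi (x / σ) / σ < nphi 0 / σ := by gcongr
        have h3 : nphi 0 / σ = 1 / (σ * Real.sqrt (2 * Real.pi)) := by
          rw [h0]; field_simp
        rw [h3] at h2
        linarith
      have hmono : StrictMonoOn (fEq k σ) (Set.Ici 0) := by
        apply strictMonoOn_of_deriv_pos (convex_Ici 0) ((fEq_cont k σ hσ).continuousOn)
        rw [interior_Ici]; exact hpos
      have := hmono (Set.self_mem_Ici) (Set.mem_Ici.2 ht.le) ht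
      rw [hzero, hft] at this
      exact lt_irrefl 0 this
    · intro hneg
      -- find small t0 > 0 with f t0 < 0 using derivative
      have hslope := hasDerivAt_iff_tendsto_slope.1 hderiv0
      have hlt : ∀ᶠ x in nhdsWithin 0 {(0:ℝ)}ᶜ, slope (fEq k σ) 0 x < 0 :=
        hslope.eventually (Filter.Tendsto.eventually_lt_const hneg Filter.tendsto_id)
      have hsub : nhdsWithin (0:ℝ) (Set.Ioi 0) ≤ nhdsWithin 0 {(0:ℝ)}ᶜ :=
        nhdsWithin_mono 0 (fun x hx => ne_of_gt hx)
      have hlt' : ∀ᶠ x in nhdsWithin (0:ℝ) (Set.Ioi 0), slope (fEq k σ) 0 x < 0 := hsub hlt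
      have hmem : ∀ᶠ x in nhdsWithin (0:ℝ) (Set.Ioi 0), x ∈ Set.Ioi (0:ℝ) :=
        eventually_mem_nhdsWithin
      obtain ⟨t0, hs0, ht0⟩ := (hlt'.and hmem).exists
      have ht0pos : (0:ℝ) < t0 := ht0
      have hft0 : fEq k σ t0 < 0 := by
        have : slope (fEq k σ) 0 t0 = fEq k σ t0 / t0 := by
          rw [slope_def_field, hzero]; simp
        rw [this] at hs0
        rcases div_neg_iff.1 hs0 with ⟨_, h⟩ | ⟨h, _⟩
        · linarith
        · exact h
      -- find T > t0 with f T > 0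
      have hT : ∀ᶠ T in Filter.atTop, 0 < fEq k σ T :=
        (fEq_tendsto k σ hk hσ).eventually_gt_atTop 0
      obtain ⟨T, hT1, hT2⟩ := ((Filter.eventually_gt_atTop t0).and hT).exists
      -- IVT on [t0, T]
      have hcont : ContinuousOn (fEq k σ) (Set.Icc t0 T) := (fEq_cont k σ hσ).continuousOn
      have h0mem : (0:ℝ) ∈ Set.Icc (fEq k σ t0) (fEq k σ T) := ⟨hft0.le, hT2.le⟩
      obtain ⟨c, hc, hfc⟩ := intermediate_value_Icc hT1.le hcont h0mem
      exact ⟨c, lt_of_lt_of_le ht0pos hc.1, hfc⟩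
  have hiff2 : 1 / (2 * k) - 1 / (σ * Real.sqrt (2 * Real.pi)) < 0 ↔
      σ * Real.sqrt (Real.pi / 2) < k := by
    have hhalf : Real.sqrt (Real.pi / 2) = Real.sqrt (2 * Real.pi) / 2 := by
      rw [show Real.pi / 2 = (2 * Real.pi) / 4 by ring,
        Real.sqrt_div (by positivity) 4,
        show (4:ℝ) = 2 ^ 2 by norm_num, Real.sqrt_sq (by norm_num)]
    rw [hhalf, sub_neg, div_lt_div_iff₀ (by positivity) (by positivity)]
    constructor <;> intro h <;> nlinarith
  exact ⟨hzero, strictConvex k σ hσ, hderiv0, fEq_tendsto k σ hk hσ, hiff, hiff.trans hiff2⟩
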